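/- arXiv:2306.08496 — 2 statements merged into one kernel-verified Lean document; each statement's English description precedes it below -/
import Mathlib

section
/- Let P be the cubic operator on ℝ² with positive coefficients αᵢⱼ, βᵢⱼ. If ξ₀ > 0 is a root of α₂₂ξ⁴ + (3α₂₁ − β₂₂)ξ³ + 3(α₁₂ − β₂₁)ξ² + (α₁₁ − 3β₁₂)ξ − β₁₁ = 0, then setting x₀ = (α₁₁ + 3α₁₂ξ₀ + 3α₂₁ξ₀² + α₂₂ξ₀³)^(−1/2), the point (x₀, ξ₀x₀) is a strictly positive fixed point of P. -/
/-!
Along the ray `y = ξ x` each component of `P` is a cubic form in `x`, so `P (x, ξ x)` equals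
`(A x³, B x³)` with `A`, `B` the forms evaluated at `(1, ξ)`. The quartic says exactly `B = ξ A`,
so the ray is invariant, and on it the fixed-point equation reduces to `A x³ = x`,
solved by `x = A^(-1/2)`.
-/

def binaryCubic (a b c d x y : ℝ) : ℝ :=
  a * x ^ 3 + 3 * b * x ^ 2 * y + 3 * c * x * y ^ 2 + d * y ^ 3

lemma binaryCubic_mul_ray (a b c d ξ x : ℝ) :
    binaryCubic a b c d x (ξ * x) = binaryCubic a b c d 1 ξ * x ^ 3 := by
  unfold binaryCubic; ring

lemma binaryCubic_one_left (a b c d ξ : ℝ) :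
    binaryCubic a b c d 1 ξ = a + 3 * b * ξ + 3 * c * ξ ^ 2 + d * ξ ^ 3 := by
  unfold binaryCubic; ring

lemma binaryCubic_one_left_pos {a b c d ξ : ℝ} (ha : 0 < a) (hb : 0 ≤ b) (hc : 0 ≤ c)
    (hd : 0 ≤ d) (hξ : 0 ≤ ξ) : 0 < binaryCubic a b c d 1 ξ := by
  rw [binaryCubic_one_left]; positivity

lemma mul_one_div_sqrt_pow_three {A : ℝ} (hA : 0 < A) :
    A * (1 / Real.sqrt A) ^ 3 = 1 / Real.sqrt A := by
  have hs : 0 < Real.sqrt A := Real.sqrt_pos.mpr hA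
  field_simp
  rw [Real.sq_sqrt hA.le]

theorem stmt_11_general (α11 α12 α21 α22 β11 β12 β21 β22 : ℝ)
    (hα11 : 0 < α11) (hα12 : 0 < α12) (hα21 : 0 < α21) (hα22 : 0 < α22)
    (ξ₀ : ℝ) (hξ : 0 < ξ₀)
    (hroot : α22*ξ₀^4 + (3*α21 - β22)*ξ₀^3 + 3*(α12 - β21)*ξ₀^2
      + (α11 - 3*β12)*ξ₀ - β11 = 0)
    (x₀ : ℝ) (hx₀ : x₀ = 1 / Real.sqrt (α11 + 3*α12*ξ₀ + 3*α21*ξ₀^2 + α22*ξ₀^3)) :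
    0 < x₀ ∧ 0 < ξ₀*x₀ ∧
    α11*x₀^3 + 3*α12*x₀^2*(ξ₀*x₀) + 3*α21*x₀*(ξ₀*x₀)^2 + α22*(ξ₀*x₀)^3 = x₀ ∧
    β11*x₀^3 + 3*β12*x₀^2*(ξ₀*x₀) + 3*β21*x₀*(ξ₀*x₀)^2 + β22*(ξ₀*x₀)^3 = ξ₀*x₀ := by
  rw [← binaryCubic_one_left] at hx₀
  have hA := binaryCubic_one_left_pos hα11 hα12.le hα21.le hα22.le hξ.le
  have hx₀pos : 0 < x₀ := by rw [hx₀]; positivity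
  have hAx : binaryCubic α11 α12 α21 α22 1 ξ₀ * x₀ ^ 3 = x₀ := by
    rw [hx₀]; exact mul_one_div_sqrt_pow_three hA
  have hB : binaryCubic β11 β12 β21 β22 1 ξ₀ = ξ₀ * binaryCubic α11 α12 α21 α22 1 ξ₀ := by
    rw [binaryCubic_one_left, binaryCubic_one_left]; linear_combination -hroot
  refine ⟨hx₀pos, by positivity, ?_, ?_⟩
  · change binaryCubic α11 α12 α21 α22 x₀ (ξ₀ * x₀) = x₀
    rw [binaryCubic_mul_ray, hAx]
  · change binaryCubic β11 β12 β21 β22 x₀ (ξ₀ * x₀) = ξ₀ * x₀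
    rw [binaryCubic_mul_ray, hB, mul_assoc, hAx]

theorem stmt_11 (α11 α12 α21 α22 β11 β12 β21 β22 : ℝ)
    (hα11 : 0 < α11) (hα12 : 0 < α12) (hα21 : 0 < α21) (hα22 : 0 < α22)
    (hβ11 : 0 < β11) (hβ12 : 0 < β12) (hβ21 : 0 < β21) (hβ22 : 0 < β22)
    (ξ₀ : ℝ) (hξ : 0 < ξ₀)
    (hroot : α22*ξ₀^4 + (3*α21 - β22)*ξ₀^3 + 3*(α12 - β21)*ξ₀^2
      + (α11 - 3*β12)*ξ₀ - β11 = 0)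
    (x₀ : ℝ) (hx₀ : x₀ = 1 / Real.sqrt (α11 + 3*α12*ξ₀ + 3*α21*ξ₀^2 + α22*ξ₀^3)) :
    0 < x₀ ∧ 0 < ξ₀*x₀ ∧
    α11*x₀^3 + 3*α12*x₀^2*(ξ₀*x₀) + 3*α21*x₀*(ξ₀*x₀)^2 + α22*(ξ₀*x₀)^3 = x₀ ∧
    β11*x₀^3 + 3*β12*x₀^2*(ξ₀*x₀) + 3*β21*x₀*(ξ₀*x₀)^2 + β22*(ξ₀*x₀)^3 = ξ₀*x₀ :=
  stmt_11_general α11 α12 α21 α22 β11 β12 β21 β22 hα11 hα12 hα21 hα22 ξ₀ hξ hroot x₀ hx₀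
end

section
/- Let P be the cubic operator on ℝ² with positive coefficients. The map (x₀,y₀) ↦ y₀/x₀ is a bijection between the set of strictly positive fixed points of P and the set of positive real roots of the quartic α₂₂ξ⁴ + (3α₂₁ − β₂₂)ξ³ + 3(α₁₂ − β₂₁)ξ² + (α₁₁ − 3β₁₂)ξ − β₁₁. -/
theorem stmt_12 (α11 α12 α21 α22 β11 β12 β21 β22 : ℝ)
    (hα11 : 0 < α11) (hα12 : 0 < α12) (hα21 : 0 < α21) (hα22 : 0 < α22)
    (hβ11 : 0 < β11) (hβ12 : 0 < β12) (hβ21 : 0 < β21) (hβ22 : 0 < β22) :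
    Set.BijOn (fun p : ℝ × ℝ => p.2 / p.1)
      {p : ℝ × ℝ | 0 < p.1 ∧ 0 < p.2 ∧
        α11*p.1^3 + 3*α12*p.1^2*p.2 + 3*α21*p.1*p.2^2 + α22*p.2^3 = p.1 ∧
        β11*p.1^3 + 3*β12*p.1^2*p.2 + 3*β21*p.1*p.2^2 + β22*p.2^3 = p.2}
      {ξ : ℝ | 0 < ξ ∧
        α22*ξ^4 + (3*α21 - β22)*ξ^3 + 3*(α12 - β21)*ξ^2 + (α11 - 3*β12)*ξ - β11 = 0} := by
  refine ⟨?_, ?_, ?_⟩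
  · rintro ⟨x, y⟩ ⟨hx, hy, hA, hB⟩
    refine ⟨div_pos hy hx, ?_⟩
    have hx' : x ≠ 0 := ne_of_gt hx
    have key : α22*(y/x)^4 + (3*α21 - β22)*(y/x)^3 + 3*(α12 - β21)*(y/x)^2
        + (α11 - 3*β12)*(y/x) - β11
        = (y*(α11*x^3 + 3*α12*x^2*y + 3*α21*x*y^2 + α22*y^3)
          - x*(β11*x^3 + 3*β12*x^2*y + 3*β21*x*y^2 + β22*y^3))/x^4 := by
      field_simp
      ring
    simp only at key ⊢
    rw [key, hA, hB]
    rw [mul_comm, sub_self, zero_div]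
  · rintro ⟨x, y⟩ ⟨hx, hy, hA, _⟩ ⟨u, v⟩ ⟨hu, hv, hA', _⟩ h
    simp only at h
    dsimp only at hA hA' hx hy hu hv
    have hx' : x ≠ 0 := ne_of_gt hx
    have hu' : u ≠ 0 := ne_of_gt hu
    set ξ := y / x with hξ
    have hξpos : 0 < ξ := div_pos hy hx
    have hyx : y = ξ * x := by rw [hξ, div_mul_cancel₀ y hx']
    have hvu : v = ξ * u := by rw [h]; field_simp
    have hC : 0 < α11 + 3*α12*ξ + 3*α21*ξ^2 + α22*ξ^3 := by positivity
    rw [hyx] at hA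
    rw [hvu] at hA'
    have h1 : x^2*(α11 + 3*α12*ξ + 3*α21*ξ^2 + α22*ξ^3) = 1 := by
      have hh : x*(x^2*(α11 + 3*α12*ξ + 3*α21*ξ^2 + α22*ξ^3)) = x*1 := by
        linear_combination hA
      exact mul_left_cancel₀ hx' hh
    have h2 : u^2*(α11 + 3*α12*ξ + 3*α21*ξ^2 + α22*ξ^3) = 1 := by
      have hh : u*(u^2*(α11 + 3*α12*ξ + 3*α21*ξ^2 + α22*ξ^3)) = u*1 := by
        linear_combination hA'
      exact mul_left_cancel₀ hu' hh
    have hx2 : x^2 = u^2 :=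
      mul_right_cancel₀ (ne_of_gt hC) (h1.trans h2.symm)
    have hxu : x = u := by
      have hfac : (x - u)*(x + u) = 0 := by linear_combination hx2
      rcases mul_eq_zero.mp hfac with h0 | h0
      · linarith
      · linarith
    have hyv : y = v := by rw [hyx, hvu, hxu]
    exact Prod.ext hxu hyv
  · rintro ξ ⟨hξ, hroot⟩
    set C := α11 + 3*α12*ξ + 3*α21*ξ^2 + α22*ξ^3 with hCdef
    have hC : 0 < C := by positivity
    have hs : 0 < Real.sqrt C := Real.sqrt_pos.mpr hC
    set x := (Real.sqrt C)⁻¹ with hxdef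
    have hxpos : 0 < x := inv_pos.mpr hs
    have hsq : (Real.sqrt C)^2 = C := Real.sq_sqrt hC.le
    have hx2 : x^2 * C = 1 := by
      rw [hxdef, inv_pow, ← hsq]
      field_simp
      simp [hsq]
    have hD : β11 + 3*β12*ξ + 3*β21*ξ^2 + β22*ξ^3 = ξ * C := by
      rw [hCdef]; linear_combination -hroot
    refine ⟨(x, ξ*x), ⟨hxpos, by positivity, ?_, ?_⟩, ?_⟩
    · show α11*x^3 + 3*α12*x^2*(ξ*x) + 3*α21*x*(ξ*x)^2 + α22*(ξ*x)^3 = x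
      linear_combination x*hx2 - x^3*hCdef
    · show β11*x^3 + 3*β12*x^2*(ξ*x) + 3*β21*x*(ξ*x)^2 + β22*(ξ*x)^3 = ξ*x
      linear_combination x^3*hD + ξ*x*hx2
    · show (ξ*x)/x = ξ
      field_simp
end
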